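/- arXiv:2206.11198 — 2 statements merged into one kernel-verified Lean document; each statement's English description precedes it below -/
import Mathlib

section
/- For every t ≥ 0, one has E[p_{t+1}(1 − p_{t+1}) | ℱ_t] = (1 − s) · p_t (1 − p_t) almost surely. -/
open MeasureTheory ProbabilityTheory Finset

/-! Write `q = p t` and `Y = ∑ γ i * x t i`, so that `p (t+1) = γ 0 * q + Y` and
`p (t+1) * (1 - p (t+1)) = γ 0 * q * (1 - γ 0 * q) + (1 - 2 * γ 0 * q) * Y - Y ^ 2`.
Given `F t`, `q` is known, each `x t i` has mean `q` and second moment `q` (it is `0`/`1`-valued),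
and distinct samples have mixed moment `q ^ 2`; hence `E[Y | F t] = (1 - γ 0) * q` and
`E[Y ^ 2 | F t] = (1 - γ 0) ^ 2 * q ^ 2 + s * q * (1 - q)` with `s = ∑ γ i ^ 2`.
Substituting, the `γ 0` terms cancel and leave `(1 - s) * q * (1 - q)`. -/

/-- The neutral-bit frequency process of the general univariate EDA with sample
size `lam` and update weights `γ 0, γ 1, …, γ lam`.  Conditionally on `F t`, the
samples `x t 1, …, x t lam` are i.i.d. Bernoulli with parameter `p t` (encoded
via all conditional mixed moments), and
`p (t+1) = γ 0 * p t + ∑ i ∈ [1..lam], γ i * x t i`. -/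
structure NeutralBitEDA {Ω : Type*} [MeasurableSpace Ω] (μ : Measure Ω)
    (lam : ℕ) (γ : ℕ → ℝ) where
  F : Filtration ℕ (inferInstance : MeasurableSpace Ω)
  p : ℕ → Ω → ℝ
  x : ℕ → ℕ → Ω → ℝ
  adapted : Adapted F p
  integrable : ∀ t, Integrable (p t) μ
  meas_x : ∀ t i, i ∈ Finset.Icc 1 lam → StronglyMeasurable[F (t + 1)] (x t i)
  p_zero : ∀ᵐ ω ∂μ, p 0 ω = 1 / 2
  p_range : ∀ t, ∀ᵐ ω ∂μ, p t ω ∈ Set.Icc (0 : ℝ) 1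
  x_binary : ∀ t i, i ∈ Finset.Icc 1 lam → ∀ᵐ ω ∂μ, x t i ω = 0 ∨ x t i ω = 1
  cond_iid : ∀ t, ∀ S : Finset ℕ, S ⊆ Finset.Icc 1 lam →
    μ[fun ω => ∏ i ∈ S, x t i ω | F t] =ᵐ[μ] fun ω => p t ω ^ S.card
  update : ∀ t, ∀ᵐ ω ∂μ,
    p (t + 1) ω = γ 0 * p t ω + ∑ i ∈ Finset.Icc 1 lam, γ i * x t i ω

theorem sum_range_succ_eq_add_sum_Icc {M : Type*} [AddCommMonoid M] (f : ℕ → M) (n : ℕ) :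
    ∑ i ∈ range (n + 1), f i = f 0 + ∑ i ∈ Icc 1 n, f i := by
  rw [range_eq_Ico, Ico_add_one_right_eq_Icc, ← insert_Icc_add_one_left_eq_Icc n.zero_le,
    sum_insert (by simp), zero_add]

theorem sum_sum_mul_ite_eq {ι R : Type*} [DecidableEq ι] [CommRing R] (s : Finset ι)
    (c : ι → R) (a b : R) :
    ∑ i ∈ s, ∑ j ∈ s, c i * c j * (if i = j then a else b)
      = (∑ i ∈ s, c i) ^ 2 * b + (∑ i ∈ s, c i ^ 2) * (a - b) := by
  have hsplit : ∀ i j : ι, (if i = j then a else b) = b + if i = j then a - b else 0 := by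
    intro i j; split_ifs <;> ring
  simp only [hsplit, mul_add, mul_ite, mul_zero, sum_add_distrib, sum_ite_eq]
  rw [sum_ite_of_true fun _ h => h, sq, sum_mul_sum, sum_mul, sum_mul]
  simp only [sum_mul, sq]

section CondExp

variable {Ω ι : Type*} {m mΩ : MeasurableSpace Ω} {μ : Measure Ω}

theorem condExp_sum_const_mul {s : Finset ι} {X Y : ι → Ω → ℝ} (c : ι → ℝ)
    (hX : ∀ i ∈ s, Integrable (X i) μ) (hXY : ∀ i ∈ s, μ[X i | m] =ᵐ[μ] Y i) :
    μ[fun ω => ∑ i ∈ s, c i * X i ω | m] =ᵐ[μ] fun ω => ∑ i ∈ s, c i * Y i ω := by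
  have hfun : ∀ Z : ι → Ω → ℝ, (fun ω => ∑ i ∈ s, c i * Z i ω) = ∑ i ∈ s, c i • Z i := by
    intro Z; ext ω; simp
  rw [hfun, hfun]
  exact (condExp_finsetSum (fun i hi => (hX i hi).smul (c i)) m).trans
    (eventuallyEq_sum fun i hi => (condExp_smul (c i) (X i) m).trans ((hXY i hi).const_smul (c i)))

theorem condExp_sum_const_mul_sq [DecidableEq ι] {s : Finset ι} {X : ι → Ω → ℝ} {a b : Ω → ℝ}
    (c : ι → ℝ) (hX : ∀ i ∈ s, ∀ j ∈ s, Integrable (X i * X j) μ)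
    (hXX : ∀ i ∈ s, ∀ j ∈ s, μ[X i * X j | m] =ᵐ[μ] fun ω => if i = j then a ω else b ω) :
    μ[fun ω => (∑ i ∈ s, c i * X i ω) ^ 2 | m] =ᵐ[μ]
      fun ω => (∑ i ∈ s, c i) ^ 2 * b ω + (∑ i ∈ s, c i ^ 2) * (a ω - b ω) := by
  have hexpand : (fun ω => (∑ i ∈ s, c i * X i ω) ^ 2)
      = fun ω => ∑ ij ∈ s ×ˢ s, c ij.1 * c ij.2 * (X ij.1 * X ij.2) ω := by
    ext ω
    rw [sq, sum_mul_sum, sum_product]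
    exact sum_congr rfl fun i _ => sum_congr rfl fun j _ => by simp only [Pi.mul_apply]; ring
  rw [hexpand]
  refine (condExp_sum_const_mul (fun ij => c ij.1 * c ij.2)
    (fun ij hij => hX ij.1 (mem_product.1 hij).1 ij.2 (mem_product.1 hij).2)
    (fun ij hij => hXX ij.1 (mem_product.1 hij).1 ij.2 (mem_product.1 hij).2)).trans ?_
  exact .of_forall fun ω => by simp only [sum_product, sum_sum_mul_ite_eq]

theorem condExp_add_mul_one_sub_add [IsFiniteMeasure μ] (hm : m ≤ mΩ) {f Y : Ω → ℝ} {C : ℝ}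
    (hf : StronglyMeasurable[m] f) (hf_bound : ∀ᵐ ω ∂μ, |f ω| ≤ C)
    (hY : Integrable Y μ) (hY2 : Integrable (fun ω => Y ω ^ 2) μ) :
    μ[fun ω => (f ω + Y ω) * (1 - (f ω + Y ω)) | m] =ᵐ[μ]
      fun ω => f ω * (1 - f ω) + (1 - 2 * f ω) * μ[Y | m] ω - μ[fun ω => Y ω ^ 2 | m] ω := by
  set g : Ω → ℝ := fun ω => 1 - 2 * f ω
  have hg : StronglyMeasurable[m] g := stronglyMeasurable_const.sub (hf.const_mul 2)
  have hg_bound : ∀ᵐ ω ∂μ, ‖g ω‖ ≤ 1 + 2 * C := by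
    filter_upwards [hf_bound] with ω hω
    simp only [g, Real.norm_eq_abs]
    exact (abs_sub _ _).trans (by rw [abs_one, abs_mul, abs_two]; linarith)
  have hff : StronglyMeasurable[m] fun ω => f ω * (1 - f ω) :=
    hf.mul (stronglyMeasurable_const.sub hf)
  have hff_int : Integrable (fun ω => f ω * (1 - f ω)) μ := by
    refine Integrable.of_bound (hff.mono hm).aestronglyMeasurable (C * (1 + C)) ?_
    filter_upwards [hf_bound] with ω hω
    rw [Real.norm_eq_abs, abs_mul]
    exact mul_le_mul hω ((abs_sub _ _).trans (by rw [abs_one]; linarith)) (abs_nonneg _)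
      ((abs_nonneg _).trans hω)
  have hgY_int : Integrable (g * Y) μ := hY.bdd_mul (hg.mono hm).aestronglyMeasurable hg_bound
  have hexpand : (fun ω => (f ω + Y ω) * (1 - (f ω + Y ω)))
      = (fun ω => f ω * (1 - f ω)) + g * Y - fun ω => Y ω ^ 2 := by
    ext ω; simp only [g, Pi.add_apply, Pi.sub_apply, Pi.mul_apply]; ring
  rw [hexpand]
  refine (condExp_sub (hff_int.add hgY_int) hY2 m).trans ?_
  refine ((condExp_add hff_int hgY_int m).trans ?_).sub (Filter.EventuallyEq.refl _ _)
  rw [condExp_of_stronglyMeasurable hm hff hff_int]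
  exact (Filter.EventuallyEq.refl _ _).add
    (condExp_stronglyMeasurable_mul_of_bound hm hg hY _ hg_bound)

end CondExp

namespace NeutralBitEDA

variable {Ω : Type*} [MeasurableSpace Ω] {μ : Measure Ω} {lam : ℕ} {γ : ℕ → ℝ}
  (E : NeutralBitEDA μ lam γ) {t i j : ℕ}

theorem abs_p_le_one : ∀ᵐ ω ∂μ, |E.p t ω| ≤ 1 := by
  filter_upwards [E.p_range t] with ω hω
  exact abs_le.2 ⟨by linarith [hω.1], hω.2⟩

theorem memLp_top_x (hi : i ∈ Icc 1 lam) : MemLp (E.x t i) ⊤ μ := by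
  refine memLp_top_of_bound ((E.meas_x t i hi).mono (E.F.le (t + 1))).aestronglyMeasurable 1 ?_
  filter_upwards [E.x_binary t i hi] with ω hω
  rcases hω with h | h <;> simp [h]

theorem condExp_x (hi : i ∈ Icc 1 lam) : μ[E.x t i | E.F t] =ᵐ[μ] E.p t := by
  simpa using E.cond_iid t {i} (singleton_subset_iff.2 hi)

theorem condExp_x_mul_x (hi : i ∈ Icc 1 lam) (hj : j ∈ Icc 1 lam) :
    μ[E.x t i * E.x t j | E.F t] =ᵐ[μ] fun ω => if i = j then E.p t ω else E.p t ω ^ 2 := by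
  by_cases hij : i = j
  · subst hij
    have hidem : E.x t i * E.x t i =ᵐ[μ] E.x t i := by
      filter_upwards [E.x_binary t i hi] with ω hω
      rcases hω with h | h <;> simp [h]
    simpa using (condExp_congr_ae hidem).trans (E.condExp_x hi)
  · have h := E.cond_iid t {i, j} (insert_subset hi (singleton_subset_iff.2 hj))
    simp only [prod_pair hij, card_pair hij] at h
    simp only [hij, if_false]
    exact h

end NeutralBitEDA

theorem neutral_bit_condexp_variance_potential_general {Ω : Type*} [MeasurableSpace Ω]
    (μ : Measure Ω) [IsProbabilityMeasure μ]
    (lam : ℕ) (γ : ℕ → ℝ)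
    (hsum : ∑ i ∈ Finset.range (lam + 1), γ i = 1)
    (E : NeutralBitEDA μ lam γ) (t : ℕ) :
    μ[fun ω => E.p (t + 1) ω * (1 - E.p (t + 1) ω) | E.F t]
      =ᵐ[μ] fun ω =>
        (1 - ∑ i ∈ Finset.Icc 1 lam, γ i ^ 2) * (E.p t ω * (1 - E.p t ω)) := by
  have hγ : ∑ i ∈ Icc 1 lam, γ i = 1 - γ 0 := by
    rw [sum_range_succ_eq_add_sum_Icc] at hsum
    linarith
  set Y : Ω → ℝ := fun ω => ∑ i ∈ Icc 1 lam, γ i * E.x t i ω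
  have hY : MemLp Y ⊤ μ := memLp_finsetSum _ fun i hi => (E.memLp_top_x hi).const_mul (γ i)
  have hY_sq : Integrable (fun ω => Y ω ^ 2) μ := by
    simpa only [sq] using (hY.mul' hY).integrable le_top
  have hxx : ∀ i ∈ Icc 1 lam, ∀ j ∈ Icc 1 lam, Integrable (E.x t i * E.x t j) μ :=
    fun i hi j hj => ((E.memLp_top_x hj).mul (E.memLp_top_x hi)).integrable le_top
  have hY1 : μ[Y | E.F t] =ᵐ[μ] fun ω => ∑ i ∈ Icc 1 lam, γ i * E.p t ω :=
    condExp_sum_const_mul γ (fun i hi => (E.memLp_top_x hi).integrable le_top)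
      fun i hi => E.condExp_x hi
  have hY2 := condExp_sum_const_mul_sq γ hxx fun i hi j hj => E.condExp_x_mul_x hi hj
  have hf_bound : ∀ᵐ ω ∂μ, |γ 0 * E.p t ω| ≤ |γ 0| := by
    filter_upwards [E.abs_p_le_one] with ω hω
    rw [abs_mul]
    exact mul_le_of_le_one_right (abs_nonneg _) hω
  have hupdate : (fun ω => E.p (t + 1) ω * (1 - E.p (t + 1) ω)) =ᵐ[μ]
      fun ω => (γ 0 * E.p t ω + Y ω) * (1 - (γ 0 * E.p t ω + Y ω)) := by
    filter_upwards [E.update t] with ω hω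
    rw [hω]
  refine (condExp_congr_ae hupdate).trans <| (condExp_add_mul_one_sub_add (E.F.le t)
    (((E.adapted t).stronglyMeasurable).const_mul (γ 0)) hf_bound
    (hY.integrable le_top) hY_sq).trans ?_
  filter_upwards [hY1, hY2] with ω h1 h2
  rw [h1, h2, ← sum_mul, hγ]
  ring

/-- For every `t ≥ 0`, one has
`E[p (t+1) * (1 - p (t+1)) | F t] = (1 - s) * p t * (1 - p t)` almost surely,
where `s = ∑_{i=1}^lam γ i ^ 2`. -/
theorem neutral_bit_condexp_variance_potential {Ω : Type*} [MeasurableSpace Ω]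
    (μ : Measure Ω) [IsProbabilityMeasure μ]
    (lam : ℕ) (hlam : 1 ≤ lam) (γ : ℕ → ℝ)
    (hsum : ∑ i ∈ Finset.range (lam + 1), γ i = 1)
    (hnz : ∃ i ∈ Finset.Icc 1 lam, γ i ≠ 0)
    (E : NeutralBitEDA μ lam γ) (t : ℕ) :
    μ[fun ω => E.p (t + 1) ω * (1 - E.p (t + 1) ω) | E.F t]
      =ᵐ[μ] fun ω =>
        (1 - ∑ i ∈ Finset.Icc 1 lam, γ i ^ 2) * (E.p t ω * (1 - E.p t ω)) :=
  neutral_bit_condexp_variance_potential_general μ lam γ hsum E t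
end

section
/- For t ≥ 0 and k ∈ {0,…,λ} define the refined process q_{λt+k} := p_t·(1 − Σ_{i=1}^{k} γ_i) + Σ_{i=1}^{k} γ_i x_t^i (this is well defined, i.e. the two definitions of q_{λ(t+1)} agree and q_{λt} = p_t). Then (q_j)_{j≥0} is a martingale with respect to its natural filtration, q_0 = 1/2, and for all t ≥ 0 and k ∈ {1,…,λ} one has |q_{λt+k} − q_{λt+k−1}| ≤ |γ_k|. -/
/-!
Refine time so that the samples of a generation are revealed one at a time: revealing
`x t (k+1)` moves `q` by `γ (k+1) * (x t (k+1) - p t)`, so it suffices that `x t (k+1)` still has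
conditional mean `p t` given `F t` and `x t 1, …, x t k`. By a π-system argument it is enough to
integrate over cylinders `B ∩ {x t i ∈ S i, i ≤ k}` with `B ∈ F t`. Since the samples are binary,
the indicator of such a cylinder is a polynomial in `x t 1, …, x t k`, and the conditional
moments give every monomial `∏ i ∈ T, x t i` the same integral over `B` against `x t (k+1)` as
against `p t`, namely that of `p t ^ (#T + 1)`. Hence `q` is a martingale for the refined
filtration, and therefore for its own natural filtration.
-/

open MeasureTheory ProbabilityTheory Finset
open scoped ENNReal NNReal

theorem exists_indicator_biInter_preimage_eq_sum_prod {ι α : Type*} (s : Finset ι)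
    (S : ι → Set ℝ) (X : ι → α → ℝ) :
    ∃ c : Finset ι → ℝ, ∀ a, (∀ i ∈ s, X i a = 0 ∨ X i a = 1) →
      (⋂ i ∈ s, X i ⁻¹' S i).indicator 1 a = ∑ T ∈ s.powerset, c T * ∏ i ∈ T, X i a := by
  classical
  set u : ι → ℝ := fun i => (S i).indicator 1 1 - (S i).indicator 1 0
  set v : ι → ℝ := fun i => (S i).indicator 1 0
  refine ⟨fun T => (∏ i ∈ T, u i) * ∏ i ∈ s \ T, v i, fun a ha => ?_⟩
  have affine : ∀ i ∈ s, (S i).indicator 1 (X i a) = u i * X i a + v i := by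
    intro i hi
    rcases ha i hi with h | h <;> simp [h, u, v]
  calc (⋂ i ∈ s, X i ⁻¹' S i).indicator 1 a
      = ∏ i ∈ s, (S i).indicator 1 (X i a) := by
        simp [prod_indicator_const_apply, ← Set.indicator_comp_right]
    _ = ∏ i ∈ s, (u i * X i a + v i) := prod_congr rfl affine
    _ = _ := by
        rw [prod_add]
        refine sum_congr rfl fun T _ => ?_
        rw [prod_mul_distrib]
        ring

theorem MeasureTheory.Martingale.natural {Ω E ι : Type*} {m : MeasurableSpace Ω} {μ : Measure Ω}
    [IsFiniteMeasure μ] [Preorder ι] [NormedAddCommGroup E] [NormedSpace ℝ E] [CompleteSpace E]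
    [MeasurableSpace E] [BorelSpace E] {f : ι → Ω → E} {𝒢 : Filtration ι m}
    (hf : Martingale f 𝒢 μ) (hfm : ∀ i, StronglyMeasurable (f i)) :
    Martingale f (Filtration.natural f hfm) μ := by
  have hle : ∀ i, Filtration.natural f hfm i ≤ 𝒢 i := fun i =>
    iSup₂_le fun j hj => ((hf.stronglyAdapted j).measurable.comap_le).trans (𝒢.mono hj)
  refine ⟨Filtration.stronglyAdapted_natural hfm, fun i j hij => ?_⟩
  calc μ[f j | Filtration.natural f hfm i]
      =ᵐ[μ] μ[μ[f j | 𝒢 i] | Filtration.natural f hfm i] :=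
        (condExp_condExp_of_le (hle i) (𝒢.le i)).symm
    _ =ᵐ[μ] μ[f i | Filtration.natural f hfm i] := condExp_congr_ae (hf.condExp_ae_eq hij)
    _ = f i := condExp_of_stronglyMeasurable _
        (Filtration.stronglyAdapted_natural hfm i) (hf.integrable i)

namespace NeutralBitEDA

variable {Ω : Type*} [MeasurableSpace Ω] {μ : Measure Ω} {lam : ℕ} {γ : ℕ → ℝ}
  (E : NeutralBitEDA μ lam γ) {t k : ℕ}

theorem measurable_x {i : ℕ} (hi : i ∈ Icc 1 lam) : Measurable (E.x t i) :=
  ((E.meas_x t i hi).mono (E.F.le _)).measurable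

theorem measurable_prod_x {T : Finset ℕ} (hT : T ⊆ Icc 1 lam) :
    Measurable fun ω => ∏ i ∈ T, E.x t i ω :=
  Finset.measurable_prod T fun _ hi => E.measurable_x (hT hi)

theorem ae_abs_prod_x_le_one {T : Finset ℕ} (hT : T ⊆ Icc 1 lam) :
    ∀ᵐ ω ∂μ, |∏ i ∈ T, E.x t i ω| ≤ 1 := by
  filter_upwards [(Filter.eventually_all_finset T).2 fun i hi => E.x_binary t i (hT hi)]
    with ω hω
  rw [abs_prod]
  refine prod_le_one (fun _ _ => abs_nonneg _) fun i hi => ?_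
  rcases hω i hi with h | h <;> simp [h]

theorem integrable_prod_x_mul {T : Finset ℕ} (hT : T ⊆ Icc 1 lam) {g : Ω → ℝ}
    (hg : Integrable g μ) : Integrable (fun ω => (∏ i ∈ T, E.x t i ω) * g ω) μ :=
  hg.bdd_mul (E.measurable_prod_x hT).aestronglyMeasurable (E.ae_abs_prod_x_le_one hT)

theorem exists_setIntegral_inter_biInter_preimage_eq_sum (hk : k ≤ lam) {B : Set Ω}
    (hB : MeasurableSet B) {S : ℕ → Set ℝ} (hS : ∀ i, MeasurableSet (S i)) :
    ∃ c : Finset ℕ → ℝ, ∀ g : Ω → ℝ, Integrable g μ →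
      ∫ ω in B ∩ ⋂ i ∈ Icc 1 k, E.x t i ⁻¹' S i, g ω ∂μ
        = ∑ T ∈ (Icc 1 k).powerset, c T * ∫ ω in B, (∏ i ∈ T, E.x t i ω) * g ω ∂μ := by
  set D := ⋂ i ∈ Icc 1 k, E.x t i ⁻¹' S i
  have hkl : Icc 1 k ⊆ Icc 1 lam := Icc_subset_Icc le_rfl hk
  have hD : MeasurableSet D :=
    Finset.measurableSet_biInter _ fun i hi => E.measurable_x (hkl hi) (hS i)
  obtain ⟨c, hc⟩ := exists_indicator_biInter_preimage_eq_sum_prod (Icc 1 k) S (E.x t)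
  have hD_poly : D.indicator 1 =ᵐ[μ]
      fun ω => ∑ T ∈ (Icc 1 k).powerset, c T * ∏ i ∈ T, E.x t i ω := by
    filter_upwards [(Filter.eventually_all_finset _).2 fun i hi => E.x_binary t i (hkl hi)]
      with ω hω using hc ω hω
  refine ⟨c, fun g hg => ?_⟩
  calc ∫ ω in B ∩ D, g ω ∂μ = ∫ ω in B, D.indicator 1 ω * g ω ∂μ := by
        rw [← setIntegral_indicator hD]
        congr 1 with ω
        by_cases hω : ω ∈ D <;> simp [hω]
    _ = ∫ ω in B, ∑ T ∈ (Icc 1 k).powerset, c T * ((∏ i ∈ T, E.x t i ω) * g ω) ∂μ := by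
        refine setIntegral_congr_ae hB ?_
        filter_upwards [hD_poly] with ω h _
        simp_rw [h, sum_mul, mul_assoc]
    _ = _ := by
        rw [integral_finsetSum _ fun T hT => ((E.integrable_prod_x_mul
          ((mem_powerset.1 hT).trans hkl) hg).const_mul _).integrableOn]
        simp_rw [integral_const_mul]

variable (t k) in
abbrev refinedSigma : MeasurableSpace Ω :=
  E.F t ⊔ ⨆ i ∈ Icc 1 k, MeasurableSpace.comap (E.x t i) inferInstance

theorem F_le_refinedSigma : (E.F t : MeasurableSpace Ω) ≤ E.refinedSigma t k := le_sup_left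

theorem comap_x_le_refinedSigma {i : ℕ} (hi : i ∈ Icc 1 k) :
    MeasurableSpace.comap (E.x t i) inferInstance ≤ E.refinedSigma t k :=
  le_sup_of_le_right (le_iSup₂ (f := fun i (_ : i ∈ Icc 1 k) =>
    MeasurableSpace.comap (E.x t i) inferInstance) i hi)

theorem refinedSigma_mono {k' : ℕ} (h : k ≤ k') : E.refinedSigma t k ≤ E.refinedSigma t k' :=
  sup_le_sup_left (biSup_mono fun _ hi => Icc_subset_Icc le_rfl h hi) _

theorem refinedSigma_le_F_succ (hk : k ≤ lam) : E.refinedSigma t k ≤ E.F (t + 1) :=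
  sup_le (E.F.mono t.le_succ) (iSup₂_le fun i hi =>
    (E.meas_x t i (Icc_subset_Icc le_rfl hk hi)).measurable.comap_le)

theorem refinedSigma_le (hk : k ≤ lam) : E.refinedSigma t k ≤ ‹MeasurableSpace Ω› :=
  (E.refinedSigma_le_F_succ hk).trans (E.F.le _)

theorem refinedSigma_le_of_lt {s r : ℕ} (hst : s < t) (hr : r ≤ lam) :
    E.refinedSigma s r ≤ E.refinedSigma t k :=
  (E.refinedSigma_le_F_succ hr).trans ((E.F.mono hst).trans E.F_le_refinedSigma)

def refinedFiltration (hlam : 0 < lam) : Filtration ℕ ‹MeasurableSpace Ω› where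
  seq j := E.refinedSigma (j / lam) (j % lam)
  mono' i j hij := by
    rcases (Nat.div_le_div_right hij).lt_or_eq with hlt | heq
    · exact E.refinedSigma_le_of_lt hlt (Nat.mod_lt _ hlam).le
    · have hi := Nat.div_add_mod i lam
      have hj := Nat.div_add_mod j lam
      show E.refinedSigma (i / lam) (i % lam) ≤ E.refinedSigma (j / lam) (j % lam)
      rw [heq] at hi ⊢
      exact E.refinedSigma_mono (by omega)
  le' j := E.refinedSigma_le (Nat.mod_lt _ hlam).le

theorem refinedFiltration_mul_add (hlam : 0 < lam) (hk : k < lam) :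
    E.refinedFiltration hlam (lam * t + k) = E.refinedSigma t k := by
  simp [refinedFiltration, Nat.mul_add_div hlam, Nat.div_eq_of_lt hk, Nat.mod_eq_of_lt hk]

variable (t k) in
def refinedCylinders : Set (Set Ω) :=
  {A | ∃ B, MeasurableSet[E.F t] B ∧ ∃ S : ℕ → Set ℝ, (∀ i, MeasurableSet (S i)) ∧
    A = B ∩ ⋂ i ∈ Icc 1 k, E.x t i ⁻¹' S i}

theorem isPiSystem_refinedCylinders : IsPiSystem (E.refinedCylinders t k) := by
  rintro _ ⟨B₁, hB₁, S₁, hS₁, rfl⟩ _ ⟨B₂, hB₂, S₂, hS₂, rfl⟩ -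
  refine ⟨B₁ ∩ B₂, hB₁.inter hB₂, fun i => S₁ i ∩ S₂ i, fun i => (hS₁ i).inter (hS₂ i), ?_⟩
  ext ω
  simp only [Set.mem_inter_iff, Set.mem_iInter, Set.mem_preimage, forall_and]
  tauto

theorem refinedSigma_eq_generateFrom :
    E.refinedSigma t k = MeasurableSpace.generateFrom (E.refinedCylinders t k) := by
  refine le_antisymm (sup_le (fun B hB => ?_) (iSup₂_le fun i hi => ?_)) ?_
  · refine MeasurableSpace.measurableSet_generateFrom
      ⟨B, hB, fun _ => Set.univ, fun _ => MeasurableSet.univ, by simp⟩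
  · rintro _ ⟨S, hS, rfl⟩
    refine MeasurableSpace.measurableSet_generateFrom
      ⟨Set.univ, MeasurableSet.univ, fun j => if j = i then S else Set.univ,
        fun j => by by_cases j = i <;> simp [*], ?_⟩
    ext ω
    simp only [Set.univ_inter, Set.mem_iInter, Set.mem_preimage]
    refine ⟨fun h j _ => ?_, fun h => by simpa using h i hi⟩
    split_ifs with hji
    · exact hji ▸ h
    · trivial
  · refine MeasurableSpace.generateFrom_le ?_
    rintro _ ⟨B, hB, S, hS, rfl⟩
    exact (E.F_le_refinedSigma _ hB).inter (Finset.measurableSet_biInter _ fun i hi =>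
      E.comap_x_le_refinedSigma hi _ ⟨S i, hS i, rfl⟩)

variable (t k) in
/-- The paper's `q (λ t + k)`. -/
def refined (ω : Ω) : ℝ :=
  E.p t ω * (1 - ∑ i ∈ Icc 1 k, γ i) + ∑ i ∈ Icc 1 k, γ i * E.x t i ω

theorem refined_zero : E.refined t 0 = E.p t := by
  funext ω
  simp [refined]

theorem refined_succ (ω : Ω) :
    E.refined t (k + 1) ω = E.refined t k ω + γ (k + 1) * (E.x t (k + 1) ω - E.p t ω) := by
  simp only [refined, sum_Icc_succ_top (Nat.le_add_left 1 k)]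
  ring

theorem ae_p_succ_eq_refined (hsum : ∑ i ∈ range (lam + 1), γ i = 1) (t : ℕ) :
    ∀ᵐ ω ∂μ, E.p (t + 1) ω = E.refined t lam ω := by
  have hγ₀ : γ 0 = 1 - ∑ i ∈ Icc 1 lam, γ i := by
    have h : ∑ i ∈ range (lam + 1), γ i = γ 0 + ∑ i ∈ Icc 1 lam, γ i := by
      rw [range_eq_Ico, sum_eq_sum_Ico_succ_bot lam.succ_pos]
      rfl
    linarith
  filter_upwards [E.update t] with ω h
  rw [h, hγ₀, refined]
  ring

theorem eq_refined_of_lt {q : ℕ → Ω → ℝ} (hq : ∀ j, q j = E.refined (j / lam) (j % lam))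
    (hk : k < lam) : q (lam * t + k) = E.refined t k := by
  rw [hq, Nat.mul_add_div (by omega), Nat.div_eq_of_lt hk, add_zero, Nat.mul_add_mod,
    Nat.mod_eq_of_lt hk]

theorem ae_eq_refined (hsum : ∑ i ∈ range (lam + 1), γ i = 1) (hlam : 0 < lam) {q : ℕ → Ω → ℝ}
    (hq : ∀ j, q j = E.refined (j / lam) (j % lam)) (hk : k ≤ lam) :
    q (lam * t + k) =ᵐ[μ] E.refined t k := by
  rcases hk.lt_or_eq with hk | hk
  · exact (E.eq_refined_of_lt hq hk).eventuallyEq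
  · rw [hk, show lam * t + lam = lam * (t + 1) + 0 by ring, E.eq_refined_of_lt hq hlam,
      refined_zero]
    exact E.ae_p_succ_eq_refined hsum t

theorem measurable_refined : Measurable[E.refinedSigma t k] (E.refined t k) :=
  (((E.adapted t).mono E.F_le_refinedSigma le_rfl).mul_const _).add <|
    Finset.measurable_sum _ fun _ hi =>
      (measurable_iff_comap_le.2 (E.comap_x_le_refinedSigma hi)).const_mul _

theorem ae_abs_refined_succ_sub_le (hk : k < lam) :
    ∀ᵐ ω ∂μ, |E.refined t (k + 1) ω - E.refined t k ω| ≤ |γ (k + 1)| := by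
  filter_upwards [E.x_binary t (k + 1) (mem_Icc.2 ⟨le_add_self, hk⟩), E.p_range t]
    with ω hx ⟨hp₀, hp₁⟩
  rw [refined_succ, add_sub_cancel_left, abs_mul]
  refine mul_le_of_le_one_right (abs_nonneg _) (abs_le.2 ?_)
  rcases hx with h | h <;> rw [h] <;> constructor <;> linarith

variable [IsFiniteMeasure μ]

theorem integrable_prod_x {T : Finset ℕ} (hT : T ⊆ Icc 1 lam) :
    Integrable (fun ω => ∏ i ∈ T, E.x t i ω) μ := by
  simpa using E.integrable_prod_x_mul hT (integrable_const (1 : ℝ))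

theorem integrable_x {i : ℕ} (hi : i ∈ Icc 1 lam) : Integrable (E.x t i) μ := by
  simpa using E.integrable_prod_x (t := t) (T := {i}) (by simpa using hi)

theorem setIntegral_prod_x {S : Finset ℕ} (hS : S ⊆ Icc 1 lam) {B : Set Ω}
    (hB : MeasurableSet[E.F t] B) :
    ∫ ω in B, ∏ i ∈ S, E.x t i ω ∂μ = ∫ ω in B, E.p t ω ^ #S ∂μ := by
  rw [← setIntegral_condExp (E.F.le t) (E.integrable_prod_x hS) hB]
  exact setIntegral_congr_ae (E.F.le t _ hB) ((E.cond_iid t S hS).mono fun ω h _ => h)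

theorem setIntegral_prod_x_mul_p {T : Finset ℕ} (hT : T ⊆ Icc 1 lam) {B : Set Ω}
    (hB : MeasurableSet[E.F t] B) :
    ∫ ω in B, (∏ i ∈ T, E.x t i ω) * E.p t ω ∂μ = ∫ ω in B, E.p t ω ^ (#T + 1) ∂μ := by
  have hint := E.integrable_prod_x_mul (t := t) hT (E.integrable t)
  rw [← setIntegral_condExp (E.F.le t) hint hB]
  refine setIntegral_congr_ae (E.F.le t _ hB) ?_
  filter_upwards [condExp_mul_of_stronglyMeasurable_right (m := E.F t)
    (E.adapted t).stronglyMeasurable hint (E.integrable_prod_x hT), E.cond_iid t T hT]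
    with ω h1 h2 _
  rw [← Pi.mul_def, h1, Pi.mul_apply, h2, pow_succ]

theorem setIntegral_prod_x_mul_x_succ (hk : k < lam) {T : Finset ℕ} (hT : T ⊆ Icc 1 k)
    {B : Set Ω} (hB : MeasurableSet[E.F t] B) :
    ∫ ω in B, (∏ i ∈ T, E.x t i ω) * E.x t (k + 1) ω ∂μ
      = ∫ ω in B, (∏ i ∈ T, E.x t i ω) * E.p t ω ∂μ := by
  have hnot : k + 1 ∉ T := fun h => by have := (mem_Icc.1 (hT h)).2; omega
  have hTlam : T ⊆ Icc 1 lam := hT.trans (Icc_subset_Icc le_rfl hk.le)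
  have hins : insert (k + 1) T ⊆ Icc 1 lam :=
    insert_subset (mem_Icc.2 ⟨by omega, by omega⟩) hTlam
  calc ∫ ω in B, (∏ i ∈ T, E.x t i ω) * E.x t (k + 1) ω ∂μ
      = ∫ ω in B, ∏ i ∈ insert (k + 1) T, E.x t i ω ∂μ := by
        simp_rw [prod_insert hnot, mul_comm]
    _ = ∫ ω in B, (∏ i ∈ T, E.x t i ω) * E.p t ω ∂μ := by
        rw [E.setIntegral_prod_x hins hB, E.setIntegral_prod_x_mul_p hTlam hB,
          card_insert_of_notMem hnot]

theorem setIntegral_x_succ_inter_biInter_preimage (hk : k < lam) {B : Set Ω}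
    (hB : MeasurableSet[E.F t] B) {S : ℕ → Set ℝ} (hS : ∀ i, MeasurableSet (S i)) :
    ∫ ω in B ∩ ⋂ i ∈ Icc 1 k, E.x t i ⁻¹' S i, E.x t (k + 1) ω ∂μ
      = ∫ ω in B ∩ ⋂ i ∈ Icc 1 k, E.x t i ⁻¹' S i, E.p t ω ∂μ := by
  obtain ⟨c, hc⟩ := E.exists_setIntegral_inter_biInter_preimage_eq_sum hk.le (E.F.le t _ hB) hS
  rw [hc _ (E.integrable_x (mem_Icc.2 ⟨le_add_self, hk⟩)), hc _ (E.integrable t)]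
  exact sum_congr rfl fun T hT => by
    rw [E.setIntegral_prod_x_mul_x_succ hk (mem_powerset.1 hT) hB]

theorem setIntegral_x_succ_eq_setIntegral_p (hk : k < lam) {s : Set Ω}
    (hs : MeasurableSet[E.refinedSigma t k] s) :
    ∫ ω in s, E.x t (k + 1) ω ∂μ = ∫ ω in s, E.p t ω ∂μ := by
  have hle := E.refinedSigma_le (t := t) hk.le
  have hx := E.integrable_x (t := t) (mem_Icc.2 ⟨le_add_self, hk⟩)
  have on_cylinders : ∀ A ∈ E.refinedCylinders t k,
      ∫ ω in A, E.x t (k + 1) ω ∂μ = ∫ ω in A, E.p t ω ∂μ := by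
    rintro _ ⟨B, hB, S, hS, rfl⟩
    exact E.setIntegral_x_succ_inter_biInter_preimage hk hB hS
  induction s, hs using MeasurableSpace.induction_on_inter E.refinedSigma_eq_generateFrom
    E.isPiSystem_refinedCylinders with
  | empty => simp
  | basic A hA => exact on_cylinders A hA
  | compl A hA ih =>
    have h_univ : ∫ ω, E.x t (k + 1) ω ∂μ = ∫ ω, E.p t ω ∂μ := by
      simpa using on_cylinders Set.univ ⟨Set.univ, MeasurableSet.univ, fun _ => Set.univ,
        fun _ => MeasurableSet.univ, by simp⟩
    have h₁ := integral_add_compl (hle _ hA) hx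
    have h₂ := integral_add_compl (hle _ hA) (E.integrable t)
    linarith
  | iUnion A hdisj hA ih =>
    rw [integral_iUnion (fun i => hle _ (hA i)) hdisj hx.integrableOn,
      integral_iUnion (fun i => hle _ (hA i)) hdisj (E.integrable t).integrableOn]
    exact tsum_congr ih

theorem condExp_x_succ (hk : k < lam) :
    μ[E.x t (k + 1) | E.refinedSigma t k] =ᵐ[μ] E.p t :=
  (ae_eq_condExp_of_forall_setIntegral_eq (E.refinedSigma_le hk.le)
    (E.integrable_x (mem_Icc.2 ⟨le_add_self, hk⟩)) (fun _ _ _ => (E.integrable t).integrableOn)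
    (fun _ hs _ => (E.setIntegral_x_succ_eq_setIntegral_p hk hs).symm)
    ((E.adapted t).mono E.F_le_refinedSigma le_rfl).aestronglyMeasurable).symm

theorem integrable_refined (hk : k ≤ lam) : Integrable (E.refined t k) μ :=
  ((E.integrable t).mul_const _).add <| integrable_finsetSum _ fun _ hi =>
    (E.integrable_x (Icc_subset_Icc le_rfl hk hi)).const_mul _

theorem condExp_refined_succ (hk : k < lam) :
    μ[E.refined t (k + 1) | E.refinedSigma t k] =ᵐ[μ] E.refined t k := by
  have hle := E.refinedSigma_le (t := t) hk.le
  have hx := E.integrable_x (t := t) (mem_Icc.2 ⟨le_add_self, hk⟩)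
  have hr := E.integrable_refined (t := t) hk.le
  have hp_fixed : μ[E.p t | E.refinedSigma t k] = E.p t := condExp_of_stronglyMeasurable hle
    ((E.adapted t).mono E.F_le_refinedSigma le_rfl).stronglyMeasurable (E.integrable t)
  have hr_fixed : μ[E.refined t k | E.refinedSigma t k] = E.refined t k :=
    condExp_of_stronglyMeasurable hle E.measurable_refined.stronglyMeasurable hr
  have hsplit : E.refined t (k + 1) = E.refined t k + γ (k + 1) • (E.x t (k + 1) - E.p t) := by
    funext ω
    simp [refined_succ]
  rw [hsplit]
  filter_upwards [condExp_add (m := E.refinedSigma t k) hr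
      ((hx.sub (E.integrable t)).smul (γ (k + 1))),
    condExp_smul (m := E.refinedSigma t k) (μ := μ) (γ (k + 1)) (E.x t (k + 1) - E.p t),
    condExp_sub (m := E.refinedSigma t k) hx (E.integrable t), E.condExp_x_succ (t := t) hk]
    with ω h₁ h₂ h₃ h₄
  simp only [h₁, Pi.add_apply, h₂, Pi.smul_apply, h₃, Pi.sub_apply, h₄, hp_fixed, hr_fixed,
    sub_self, smul_zero, add_zero]

theorem martingale_refinedFiltration (hsum : ∑ i ∈ range (lam + 1), γ i = 1) (hlam : 0 < lam)
    {q : ℕ → Ω → ℝ} (hq : ∀ j, q j = E.refined (j / lam) (j % lam)) :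
    Martingale q (E.refinedFiltration hlam) μ := by
  refine martingale_nat (fun j => ?_) (fun j => ?_) fun j => ?_
  · rw [hq j]
    exact E.measurable_refined.stronglyMeasurable
  · rw [hq j]
    exact E.integrable_refined (Nat.mod_lt _ hlam).le
  · obtain ⟨t, k, hk, rfl⟩ : ∃ t k, k < lam ∧ j = lam * t + k :=
      ⟨j / lam, j % lam, Nat.mod_lt _ hlam, (Nat.div_add_mod j lam).symm⟩
    rw [E.eq_refined_of_lt hq hk, E.refinedFiltration_mul_add hlam hk]
    exact ((condExp_congr_ae (E.ae_eq_refined hsum hlam hq hk)).trans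
      (E.condExp_refined_succ hk)).symm

end NeutralBitEDA

theorem neutral_bit_refined_martingale_general {Ω : Type*} [MeasurableSpace Ω]
    (μ : Measure Ω) [IsProbabilityMeasure μ]
    (lam : ℕ) (hlam : 1 ≤ lam) (γ : ℕ → ℝ)
    (hsum : ∑ i ∈ Finset.range (lam + 1), γ i = 1)
    (E : NeutralBitEDA μ lam γ)
    (q : ℕ → Ω → ℝ)
    (hq : ∀ j ω, q j ω =
      E.p (j / lam) ω * (1 - ∑ i ∈ Finset.Icc 1 (j % lam), γ i)
        + ∑ i ∈ Finset.Icc 1 (j % lam), γ i * E.x (j / lam) i ω)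
    (hqm : ∀ j, StronglyMeasurable (q j)) :
    (∀ t : ℕ, ∀ᵐ ω ∂μ,
      E.p (t + 1) ω =
        E.p t ω * (1 - ∑ i ∈ Finset.Icc 1 lam, γ i)
          + ∑ i ∈ Finset.Icc 1 lam, γ i * E.x t i ω) ∧
    (∀ t : ℕ, ∀ ω, q (lam * t) ω = E.p t ω) ∧
    (∀ᵐ ω ∂μ, q 0 ω = 1 / 2) ∧
    Martingale q (Filtration.natural q hqm) μ ∧
    (∀ t : ℕ, ∀ k ∈ Finset.Icc 1 lam, ∀ᵐ ω ∂μ,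
      |q (lam * t + k) ω - q (lam * t + (k - 1)) ω| ≤ |γ k|) := by
  have hq' : ∀ j, q j = E.refined (j / lam) (j % lam) := fun j => funext (hq j)
  have hq_mul : ∀ t, q (lam * t) = E.p t := fun t => by
    simpa [E.refined_zero] using E.eq_refined_of_lt (t := t) hq' hlam
  refine ⟨E.ae_p_succ_eq_refined hsum, fun t ω => by rw [hq_mul],
    E.p_zero.mono fun ω h => by rw [← h, ← hq_mul, mul_zero],
    (E.martingale_refinedFiltration hsum hlam hq').natural hqm, ?_⟩
  intro t k hk
  obtain ⟨k, hkl, rfl⟩ : ∃ k', k' < lam ∧ k = k' + 1 := ⟨k - 1, by grind, by grind⟩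
  filter_upwards [E.ae_eq_refined (t := t) hsum hlam hq' hkl,
    E.ae_eq_refined (t := t) hsum hlam hq' hkl.le, E.ae_abs_refined_succ_sub_le (t := t) hkl]
    with ω h₁ h₂ h
  rwa [add_tsub_cancel_right, h₁, h₂]

/-- The refined process `q (lam * t + k) = p t * (1 - ∑_{i=1}^k γ i) + ∑_{i=1}^k γ i * x t i`
is well defined (the two definitions of `q (lam * (t+1))` agree and
`q (lam * t) = p t`), starts at `1/2`, is a martingale with respect to its
natural filtration, and has increments bounded by `|q (lam*t+k) - q (lam*t+k-1)| ≤ |γ k|`. -/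
theorem neutral_bit_refined_martingale {Ω : Type*} [MeasurableSpace Ω]
    (μ : Measure Ω) [IsProbabilityMeasure μ]
    (lam : ℕ) (hlam : 1 ≤ lam) (γ : ℕ → ℝ)
    (hsum : ∑ i ∈ Finset.range (lam + 1), γ i = 1)
    (hnz : ∃ i ∈ Finset.Icc 1 lam, γ i ≠ 0)
    (E : NeutralBitEDA μ lam γ)
    (q : ℕ → Ω → ℝ)
    (hq : ∀ j ω, q j ω =
      E.p (j / lam) ω * (1 - ∑ i ∈ Finset.Icc 1 (j % lam), γ i)
        + ∑ i ∈ Finset.Icc 1 (j % lam), γ i * E.x (j / lam) i ω)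
    (hqm : ∀ j, StronglyMeasurable (q j)) :
    (∀ t : ℕ, ∀ᵐ ω ∂μ,
      E.p (t + 1) ω =
        E.p t ω * (1 - ∑ i ∈ Finset.Icc 1 lam, γ i)
          + ∑ i ∈ Finset.Icc 1 lam, γ i * E.x t i ω) ∧
    (∀ t : ℕ, ∀ ω, q (lam * t) ω = E.p t ω) ∧
    (∀ᵐ ω ∂μ, q 0 ω = 1 / 2) ∧
    Martingale q (Filtration.natural q hqm) μ ∧
    (∀ t : ℕ, ∀ k ∈ Finset.Icc 1 lam, ∀ᵐ ω ∂μ,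
      |q (lam * t + k) ω - q (lam * t + (k - 1)) ω| ≤ |γ k|) :=
  neutral_bit_refined_martingale_general μ lam hlam γ hsum E q hq hqm
end
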